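/- Under Assumptions B, let u : [0,∞) → H be the continuously differentiable function with u(t) ∈ B(y, R) and F(u(t)) = h + e^{−t}·v₀ for all t ≥ 0. Then ‖u(t) − u₀‖ ≤ m·r/(1−q) for all t ≥ 0. -/

import Mathlib

open Metric Set Filter

/-!
Differentiating `F (u t) = h + e^{-t} v₀` gives `F'(u t) u'(t) = -e^{-t} v₀`. Since `u t` stays in
`B(y, R)`, `F'(u t)` is within `ω R` of `F'(y)`, whose inverse `Q` has norm at most `m`; as
`m ω R = q < 1`, this perturbation argument yields `(1 - q) ‖u'(t)‖ ≤ m r e^{-t}`. Integrating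
`e^{-t}` over `[0, ∞)` bounds the distance travelled by `m r / (1 - q)`.
-/

namespace ContinuousLinearMap

variable {𝕜 E G : Type*} [NontriviallyNormedField 𝕜]
  [SeminormedAddCommGroup E] [NormedSpace 𝕜 E] [SeminormedAddCommGroup G] [NormedSpace 𝕜 G]

theorem one_sub_mul_norm_le_of_comp_eq_id {A B : E →L[𝕜] G} {Q : G →L[𝕜] E} {m ε : ℝ}
    (hQA : Q.comp A = ContinuousLinearMap.id 𝕜 E) (hQm : ‖Q‖ ≤ m) (hBA : ‖B - A‖ ≤ ε) (w : E) :
    (1 - m * ε) * ‖w‖ ≤ m * ‖B w‖ := by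
  have hm : 0 ≤ m := (norm_nonneg Q).trans hQm
  have hw : w = Q (B w) - Q ((B - A) w) := by
    rw [← map_sub, sub_apply, sub_sub_cancel, ← comp_apply, hQA, id_apply]
  have hQ : ∀ z, ‖Q z‖ ≤ m * ‖z‖ := fun z =>
    (Q.le_opNorm z).trans (mul_le_mul_of_nonneg_right hQm (norm_nonneg z))
  have hBAw : ‖(B - A) w‖ ≤ ε * ‖w‖ :=
    ((B - A).le_opNorm w).trans (mul_le_mul_of_nonneg_right hBA (norm_nonneg w))
  have : ‖w‖ ≤ m * ‖B w‖ + m * (ε * ‖w‖) :=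
    calc ‖w‖ = ‖Q (B w) - Q ((B - A) w)‖ := congrArg _ hw
      _ ≤ ‖Q (B w)‖ + ‖Q ((B - A) w)‖ := norm_sub_le _ _
      _ ≤ m * ‖B w‖ + m * (ε * ‖w‖) :=
        add_le_add (hQ _) ((hQ _).trans (mul_le_mul_of_nonneg_left hBAw hm))
  linarith

end ContinuousLinearMap

theorem HasFDerivAt.apply_eq_of_eqOn_comp {E G : Type*} [NormedAddCommGroup E] [NormedSpace ℝ E]
    [NormedAddCommGroup G] [NormedSpace ℝ G] {F : E → G} {F' : E →L[ℝ] G} {u : ℝ → E}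
    {g : ℝ → G} {u' : E} {g' : G} {s : Set ℝ} {x : ℝ}
    (hF : HasFDerivAt F F' (u x)) (hu : HasDerivWithinAt u u' s x)
    (hg : HasDerivWithinAt g g' s x) (hFu : EqOn (F ∘ u) g s) (hx : x ∈ s)
    (hs : UniqueDiffWithinAt ℝ s x) : F' u' = g' :=
  hs.eq_deriv s ((hF.comp_hasDerivWithinAt x hu).congr_of_mem (fun _ ht => (hFu ht).symm) hx) hg

theorem norm_sub_le_of_norm_deriv_le_mul_exp_neg {E : Type*} [NormedAddCommGroup E]
    [NormedSpace ℝ E] {u u' : ℝ → E} {C : ℝ}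
    (hu : ∀ x ∈ Ici (0 : ℝ), HasDerivWithinAt u (u' x) (Ici 0) x)
    (hbound : ∀ x, 0 ≤ x → ‖u' x‖ ≤ C * Real.exp (-x)) {t : ℝ} (ht : 0 ≤ t) :
    ‖u t - u 0‖ ≤ C := by
  have hC : 0 ≤ C := by simpa using (norm_nonneg _).trans (hbound 0 le_rfl)
  have hB : ∀ x, HasDerivAt (fun s => C * (1 - Real.exp (-s))) (C * Real.exp (-x)) x := fun x => by
    simpa using ((hasDerivAt_neg x).exp.const_sub 1).const_mul C
  have hmain : ‖u t - u 0‖ ≤ C * (1 - Real.exp (-t)) := by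
    refine image_norm_le_of_norm_deriv_right_le_deriv_boundary (f := fun s => u s - u 0)
      ?_ (fun x hx => ((hu x hx.1).sub_const (u 0)).mono (Ici_subset_Ici.mpr hx.1)) (by simp) hB
      (fun x hx => hbound x hx.1) (right_mem_Icc.mpr ht)
    exact ContinuousOn.sub (fun s hs => (hu s hs.1).continuousWithinAt.mono Icc_subset_Ici_self)
      continuousOn_const
  calc ‖u t - u 0‖ ≤ C * (1 - Real.exp (-t)) := hmain
    _ ≤ C := mul_le_of_le_one_right hC (sub_le_self _ (Real.exp_pos _).le)

theorem stmt_9_general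
    {H : Type*} [NormedAddCommGroup H] [InnerProductSpace ℝ H]
    (F : H → H) (F' : H → H →L[ℝ] H) (y : H) (R m q : ℝ)
    (hdiff : ∀ u ∈ closedBall y R, HasFDerivAt F (F' u) u)
    (Q : H →L[ℝ] H)
    (hQl : Q.comp (F' y) = ContinuousLinearMap.id ℝ H)
    (hQm : ‖Q‖ ≤ m)
    (ω : ℝ → ℝ)
    (hωmono : StrictMonoOn ω (Icc 0 (2 * R)))
    (hωF : ∀ u ∈ closedBall y R, ∀ v ∈ closedBall y R, ‖F' u - F' v‖ ≤ ω ‖u - v‖)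
    (hq : m * ω R = q) (hq1 : q < 1)
    (u₀ h : H) (v₀ : H)
    (r : ℝ) (hr : r = ‖v₀‖)
    (u : ℝ → H)
    (hu : ∀ t : ℝ, 0 ≤ t → u t ∈ closedBall y R ∧ F (u t) = h + Real.exp (-t) • v₀)
    (u' : ℝ → H)
    (huderiv : ∀ t ∈ Ici (0:ℝ), HasDerivWithinAt u (u' t) (Ici 0) t)
    (hu0 : u 0 = u₀) :
    ∀ t : ℝ, 0 ≤ t → ‖u t - u₀‖ ≤ m * r / (1 - q) := by
  have hderiv (x : ℝ) (hx : 0 ≤ x) : F' (u x) (u' x) = -Real.exp (-x) • v₀ := by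
    refine (hdiff _ (hu x hx).1).apply_eq_of_eqOn_comp (huderiv x hx) ?_
      (fun s hs => (hu s hs).2) hx (uniqueDiffOn_Ici 0 x hx)
    simpa using (((hasDerivAt_neg x).exp.smul_const v₀).const_add h).hasDerivWithinAt
  have hclose (x : ℝ) (hx : 0 ≤ x) : ‖F' (u x) - F' y‖ ≤ ω R := by
    have hdist : ‖u x - y‖ ≤ R := mem_closedBall_iff_norm.mp (hu x hx).1
    have hR : 0 ≤ R := (norm_nonneg _).trans hdist
    refine (hωF _ (hu x hx).1 y (mem_closedBall_self hR)).trans ?_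
    exact hωmono.monotoneOn ⟨norm_nonneg _, by linarith⟩ ⟨hR, by linarith⟩ hdist
  have hbound (x : ℝ) (hx : 0 ≤ x) : ‖u' x‖ ≤ m * r / (1 - q) * Real.exp (-x) := by
    have key := (F' y).one_sub_mul_norm_le_of_comp_eq_id hQl hQm (hclose x hx) (u' x)
    rw [hq, hderiv x hx, norm_smul, norm_neg, Real.norm_of_nonneg (Real.exp_pos _).le,
      ← hr] at key
    rw [div_mul_eq_mul_div, le_div_iff₀ (sub_pos.mpr hq1)]
    linarith
  intro t ht
  simpa [hu0] using norm_sub_le_of_norm_deriv_le_mul_exp_neg huderiv hbound ht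

theorem stmt_9
    {H : Type*} [NormedAddCommGroup H] [InnerProductSpace ℝ H] [CompleteSpace H]
    (F : H → H) (F' : H → H →L[ℝ] H) (y f : H) (R m q : ℝ)
    (hf : F y = f) (hR : 0 < R)
    (hdiff : ∀ u ∈ closedBall y R, HasFDerivAt F (F' u) u)
    (Q : H →L[ℝ] H)
    (hQl : Q.comp (F' y) = ContinuousLinearMap.id ℝ H)
    (hQr : (F' y).comp Q = ContinuousLinearMap.id ℝ H)
    (hm : 0 < m) (hQm : ‖Q‖ ≤ m)
    (ω : ℝ → ℝ)
    (hωcont : ContinuousOn ω (Icc 0 (2 * R)))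
    (hωmono : StrictMonoOn ω (Icc 0 (2 * R)))
    (hω0 : ω 0 = 0)
    (hωF : ∀ u ∈ closedBall y R, ∀ v ∈ closedBall y R, ‖F' u - F' v‖ ≤ ω ‖u - v‖)
    (hq : m * ω R = q) (hq0 : 0 < q) (hq1 : q < 1)
    (ρ : ℝ) (hρ : ρ = (1 - q) * R / m)
    (u₀ h : H) (v₀ : H) (hv₀ : v₀ = F u₀ - h)
    (r δ : ℝ) (hr : r = ‖v₀‖) (hδ : ‖h - f‖ ≤ δ) (hδr : δ + r ≤ ρ)
    (u : ℝ → H)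
    (hu : ∀ t : ℝ, 0 ≤ t → u t ∈ closedBall y R ∧ F (u t) = h + Real.exp (-t) • v₀)
    (u' : ℝ → H)
    (huderiv : ∀ t ∈ Ici (0:ℝ), HasDerivWithinAt u (u' t) (Ici 0) t)
    (hu'cont : ContinuousOn u' (Ici 0))
    (hu0 : u 0 = u₀) :
    ∀ t : ℝ, 0 ≤ t → ‖u t - u₀‖ ≤ m * r / (1 - q) :=
  stmt_9_general F F' y R m q hdiff Q hQl hQm ω hωmono hωF hq hq1 u₀ h v₀ r hr u hu u' huderiv hu0
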